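/- Let V be a nonempty countable set and b : P(V) → [0,∞] satisfy conditions (0) b(X) = 0 iff X ∈ {∅, V}; (1) symmetry; (2) submodularity; (3) monotone-continuity: b(lim X_n) = lim b(X_n) for every ⊆-monotone sequence (X_n); and (4) finiteness of λ_b. If (X_n) is a ⊆-monotone sequence of optimal cuts with lim X_n ∉ {∅, V}, then (X_n) has no essential subsequence; in particular (X_n) itself is not essential. -/

import Mathlib

open Set Filter Topology ENNReal

noncomputable section

/-- `λ_b(u,v)`: the infimum of `b(X)` over all `u-v` cuts `X`
(sets with `u ∈ X` and `v ∉ X`). -/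
def lamB {V : Type*} (b : Set V → ℝ≥0∞) (u v : V) : ℝ≥0∞ :=
  ⨅ (X : Set V) (_ : u ∈ X ∧ v ∉ X), b X

/-- `X` is an optimal `u-v` cut: a `u-v` cut with `b(X) = λ_b(u,v)`. -/
def IsOptCut {V : Type*} (b : Set V → ℝ≥0∞) (u v : V) (X : Set V) : Prop :=
  u ∈ X ∧ v ∉ X ∧ b X = lamB b u v

/-- `X` separates `u` and `v` optimally: `X` or its complement is an optimal `u-v` cut. -/
def SepOptimally {V : Type*} (b : Set V → ℝ≥0∞) (u v : V) (X : Set V) : Prop :=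
  IsOptCut b u v X ∨ IsOptCut b u v Xᶜ

/-- A sequence of cuts is essential if each member separates optimally some vertex pair
that no earlier member separates optimally. -/
def Essential {V : Type*} (b : Set V → ℝ≥0∞) (X : ℕ → Set V) : Prop :=
  ∀ n : ℕ, ∃ u v : V, u ≠ v ∧ SepOptimally b u v (X n) ∧
    ∀ m < n, ¬ SepOptimally b u v (X m)

/-!
Passing to complements, we may assume the cuts increase to `L`. By continuity
`b (L \ Y n) → b ∅ = 0` while `b (Y n) → b L > 0`. Once `b (L \ Y n)` is small, an optimal
`u-v` cut `Y n` has `v ∉ L`, since otherwise `(L \ Y n)ᶜ` would be a cheaper `u-v` cut;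
and uncrossing an optimal `u-v` cut `Y n` with `L \ Y m` for `m < n` shows `u ∈ Y m`.
So `Y m` is a `u-v` cut, and if it is optimal for `u'-v'` then
`b (Y m) = λ(u', v') ≤ b (Y n) = λ(u, v)`: `Y m` already separates `u` and `v` optimally.
-/

section Cuts

variable {V : Type*} {b : Set V → ℝ≥0∞} {u v : V} {X Y L : Set V}

theorem lamB_le (b : Set V → ℝ≥0∞) (hu : u ∈ X) (hv : v ∉ X) : lamB b u v ≤ b X :=
  iInf₂_le X ⟨hu, hv⟩

theorem lamB_comm (h1 : ∀ X : Set V, b Xᶜ = b X) (u v : V) : lamB b u v = lamB b v u := by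
  have key : ∀ x y : V, lamB b x y ≤ lamB b y x := fun x y =>
    le_iInf₂ fun Z hZ =>
      (lamB_le b (X := Zᶜ) (by simpa using hZ.2) (by simpa using hZ.1)).trans_eq (h1 Z)
  exact le_antisymm (key u v) (key v u)

theorem IsOptCut.compl_swap (h1 : ∀ X : Set V, b Xᶜ = b X) (hX : IsOptCut b u v X) :
    IsOptCut b v u Xᶜ :=
  ⟨by simpa using hX.2.1, by simpa using hX.1, by rw [h1, hX.2.2, lamB_comm h1]⟩

theorem sepOptimally_iff (h1 : ∀ X : Set V, b Xᶜ = b X) :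
    SepOptimally b u v X ↔ IsOptCut b u v X ∨ IsOptCut b v u X :=
  or_congr_right ⟨fun h => by simpa using h.compl_swap h1, fun h => h.compl_swap h1⟩

theorem sepOptimally_compl : SepOptimally b u v Xᶜ ↔ SepOptimally b u v X := by
  rw [SepOptimally, SepOptimally, compl_compl, or_comm]

theorem essential_compl_iff {Y : ℕ → Set V} :
    Essential b (fun n => (Y n)ᶜ) ↔ Essential b Y := by
  simp only [Essential, sepOptimally_compl]

theorem IsOptCut.notMem_of_diff_lt (h1 : ∀ X : Set V, b Xᶜ = b X) (hX : IsOptCut b u v X)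
    (hlt : b (L \ X) < b X) : v ∉ L := by
  intro hvL
  have hcut : lamB b u v ≤ b (L \ X)ᶜ := lamB_le b (by simp [hX.1]) (by simp [hvL, hX.2.1])
  rw [h1, ← hX.2.2] at hcut
  exact hcut.not_gt hlt

theorem IsOptCut.mem_of_diff_lt (h2 : ∀ X Y : Set V, b (X ∩ Y) + b (X ∪ Y) ≤ b X + b Y)
    (hX : IsOptCut b u v X) (hYX : Y ⊆ X) (hXL : X ⊆ L) (hfin : lamB b u v ≠ ⊤)
    (hlt : b (L \ Y) < b L) : u ∈ Y := by
  by_contra huY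
  have hcut : b X ≤ b (X ∩ (L \ Y)) :=
    hX.2.2 ▸ lamB_le b ⟨hX.1, hXL hX.1, huY⟩ (fun h => hX.2.1 h.1)
  have huncross : b X + b L ≤ b X + b (L \ Y) :=
    calc b X + b L ≤ b (X ∩ (L \ Y)) + b (X ∪ (L \ Y)) := by
          rw [union_sdiff_cancel' hYX hXL]; gcongr
      _ ≤ b X + b (L \ Y) := h2 X (L \ Y)
  exact ((ENNReal.add_le_add_iff_left (hX.2.2 ▸ hfin)).mp huncross).not_gt hlt

theorem IsOptCut.of_superset_of_diff_lt (h1 : ∀ X : Set V, b Xᶜ = b X)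
    (h2 : ∀ X Y : Set V, b (X ∩ Y) + b (X ∪ Y) ≤ b X + b Y) {u' v' : V}
    (hX : IsOptCut b u v X) (hY : IsOptCut b u' v' Y) (hYX : Y ⊆ X) (hXL : X ⊆ L)
    (hfin : lamB b u v ≠ ⊤) (hYL : b (L \ Y) < b L) (hYY : b (L \ Y) < b Y)
    (hXX : b (L \ X) < b X) : IsOptCut b u v Y := by
  have huY : u ∈ Y := hX.mem_of_diff_lt h2 hYX hXL hfin hYL
  have hvY : v ∉ Y := fun h => hX.notMem_of_diff_lt h1 hXX (hXL (hYX h))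
  have hv'X : v' ∉ X := fun h => hY.notMem_of_diff_lt h1 hYY (hXL h)
  refine ⟨huY, hvY, le_antisymm ?_ (lamB_le b huY hvY)⟩
  calc b Y = lamB b u' v' := hY.2.2
    _ ≤ b X := lamB_le b (hYX hY.1) hv'X
    _ = lamB b u v := hX.2.2

theorem exists_eventually_diff_lt_lt (hb : b ∅ = 0)
    (h3m : ∀ X : ℕ → Set V, Monotone X →
      Tendsto (fun n => b (X n)) atTop (𝓝 (b (⋃ n, X n))))
    (h3a : ∀ X : ℕ → Set V, Antitone X →
      Tendsto (fun n => b (X n)) atTop (𝓝 (b (⋂ n, X n))))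
    {Y : ℕ → Set V} (hY : Monotone Y) (hL : b (⋃ n, Y n) ≠ 0) :
    ∃ ε < b (⋃ n, Y n), ∀ᶠ n in atTop, b ((⋃ n, Y n) \ Y n) < ε ∧ ε < b (Y n) := by
  obtain ⟨ε, hε, hεL⟩ := exists_between (pos_iff_ne_zero.mpr hL)
  have hdiff : Tendsto (fun n => b ((⋃ n, Y n) \ Y n)) atTop (𝓝 0) := by
    have hanti : Antitone fun n => (⋃ n, Y n) \ Y n := fun i j hij =>
      sdiff_subset_sdiff_right (hY hij)
    simpa [← sdiff_iUnion, hb] using h3a _ hanti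
  exact ⟨ε, hεL, (hdiff.eventually_lt_const hε).and ((h3m Y hY).eventually_const_lt hεL)⟩

theorem Monotone.not_essential (h0 : ∀ X : Set V, b X = 0 ↔ X = ∅ ∨ X = Set.univ)
    (h1 : ∀ X : Set V, b Xᶜ = b X)
    (h2 : ∀ X Y : Set V, b (X ∩ Y) + b (X ∪ Y) ≤ b X + b Y)
    (h3m : ∀ X : ℕ → Set V, Monotone X →
      Tendsto (fun n => b (X n)) atTop (𝓝 (b (⋃ n, X n))))
    (h3a : ∀ X : ℕ → Set V, Antitone X →
      Tendsto (fun n => b (X n)) atTop (𝓝 (b (⋂ n, X n))))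
    (h4 : ∀ u v : V, u ≠ v → lamB b u v < ⊤)
    {Y : ℕ → Set V} (hY : Monotone Y) (hL0 : ⋃ n, Y n ≠ ∅) (hL1 : ⋃ n, Y n ≠ univ) :
    ¬ Essential b Y := by
  intro hE
  have hbL : b (⋃ n, Y n) ≠ 0 := fun h => ((h0 _).mp h).elim hL0 hL1
  obtain ⟨ε, hεL, hev⟩ := exists_eventually_diff_lt_lt ((h0 ∅).mpr (Or.inl rfl)) h3m h3a hY hbL
  obtain ⟨N, hN⟩ := eventually_atTop.mp hev
  obtain ⟨hN₀, hN₀'⟩ := hN N le_rfl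
  obtain ⟨hN₁, hN₁'⟩ := hN (N + 1) N.le_succ
  have descend : ∀ {x y : V}, x ≠ y → IsOptCut b x y (Y (N + 1)) → IsOptCut b x y (Y N) := by
    intro x y hxy hx
    obtain ⟨u', v', -, hsep, -⟩ := hE N
    rcases (sepOptimally_iff h1).mp hsep with hYN | hYN <;>
      exact hx.of_superset_of_diff_lt h1 h2 hYN (hY N.le_succ) (subset_iUnion Y _)
        (h4 x y hxy).ne (hN₀.trans hεL) (hN₀.trans hN₀') (hN₁.trans hN₁')
  obtain ⟨u, v, huv, hsep, hnew⟩ := hE (N + 1)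
  refine hnew N N.lt_succ_self ?_
  rw [sepOptimally_iff h1] at hsep ⊢
  exact hsep.imp (descend huv) (descend huv.symm)

end Cuts

theorem no_essential_subsequence_general {V : Type*}
    (b : Set V → ℝ≥0∞)
    (h0 : ∀ X : Set V, b X = 0 ↔ X = ∅ ∨ X = Set.univ)
    (h1 : ∀ X : Set V, b Xᶜ = b X)
    (h2 : ∀ X Y : Set V, b (X ∩ Y) + b (X ∪ Y) ≤ b X + b Y)
    (h3m : ∀ X : ℕ → Set V, Monotone X →
      Filter.Tendsto (fun n => b (X n)) Filter.atTop (nhds (b (⋃ n, X n))))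
    (h3a : ∀ X : ℕ → Set V, Antitone X →
      Filter.Tendsto (fun n => b (X n)) Filter.atTop (nhds (b (⋂ n, X n))))
    (h4 : ∀ u v : V, u ≠ v → lamB b u v < ⊤)
    (X : ℕ → Set V)
    (L : Set V)
    (hmono : (Monotone X ∧ L = ⋃ n, X n) ∨ (Antitone X ∧ L = ⋂ n, X n))
    (hL0 : L ≠ ∅) (hL1 : L ≠ Set.univ) :
    ∀ φ : ℕ → ℕ, StrictMono φ → ¬ Essential b (fun n => X (φ n)) := by
  intro φ hφ
  rcases hmono with ⟨hX, rfl⟩ | ⟨hX, rfl⟩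
  · rw [← hX.iUnion_comp_tendsto_atTop hφ.tendsto_atTop] at hL0 hL1
    exact (hX.comp hφ.monotone).not_essential h0 h1 h2 h3m h3a h4 hL0 hL1
  · rw [← hX.iInter_comp_tendsto_atTop hφ.tendsto_atTop] at hL0 hL1
    rw [← essential_compl_iff]
    refine Monotone.not_essential h0 h1 h2 h3m h3a h4
      (fun i j hij => compl_subset_compl.mpr (hX (hφ.monotone hij))) ?_ ?_
    · rwa [← compl_iInter, ne_eq, compl_empty_iff]
    · rwa [← compl_iInter, ne_eq, compl_univ_iff]

/-- A `⊆`-monotone sequence of optimal cuts whose limit is neither `∅` nor `V` has no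
essential subsequence. -/
theorem no_essential_subsequence {V : Type*} [Countable V] [Nonempty V]
    (b : Set V → ℝ≥0∞)
    (h0 : ∀ X : Set V, b X = 0 ↔ X = ∅ ∨ X = Set.univ)
    (h1 : ∀ X : Set V, b Xᶜ = b X)
    (h2 : ∀ X Y : Set V, b (X ∩ Y) + b (X ∪ Y) ≤ b X + b Y)
    (h3m : ∀ X : ℕ → Set V, Monotone X →
      Filter.Tendsto (fun n => b (X n)) Filter.atTop (nhds (b (⋃ n, X n))))
    (h3a : ∀ X : ℕ → Set V, Antitone X →
      Filter.Tendsto (fun n => b (X n)) Filter.atTop (nhds (b (⋂ n, X n))))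
    (h4 : ∀ u v : V, u ≠ v → lamB b u v < ⊤)
    (X : ℕ → Set V) (hopt : ∀ n, ∃ x y : V, x ≠ y ∧ IsOptCut b x y (X n))
    (L : Set V)
    (hmono : (Monotone X ∧ L = ⋃ n, X n) ∨ (Antitone X ∧ L = ⋂ n, X n))
    (hL0 : L ≠ ∅) (hL1 : L ≠ Set.univ) :
    ∀ φ : ℕ → ℕ, StrictMono φ → ¬ Essential b (fun n => X (φ n)) :=
  no_essential_subsequence_general b h0 h1 h2 h3m h3a h4 X L hmono hL0 hL1
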